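/- arXiv:2301.06283 — 3 statements merged into one kernel-verified Lean document; each statement's English description precedes it below -/
import Mathlib

section
/- Let Y_1, ..., Y_n be independent mean-zero random variables that are uniformly sub-Gaussian: max_i c1^2 E[exp(Y_i^2/c1^2) - 1] ≤ c2^2 for constants c1, c2. Then for any t > 0, P(|n^{-1} Σ_i Y_i| > t) ≤ 2 exp(-n t^2 / (8 (c1^2 + c2^2))). -/
/-!
A mean-zero variable `Y` with `c1² (E exp(Y²/c1²) - 1) ≤ c2²` has a sub-Gaussian moment generating
function: `E exp(λY) ≤ exp((c1² + c2²) λ²)` for every `λ`. For `λ² c1² ≤ 1` this follows from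
`exp x ≤ x + exp x²` and convexity of `exp`, the linear term being killed by `E Y = 0`; for larger
`λ` from `λY ≤ λ² c1²/2 + Y²/(2c1²)`. Hoeffding's inequality for sums of independent sub-Gaussian
variables, applied to both tails of `∑ Y i`, then gives `2 exp(-n t² / (4 (c1² + c2²)))`.
-/

open MeasureTheory ProbabilityTheory Real

namespace Real

lemma exp_le_add_exp_sq (x : ℝ) : exp x ≤ x + exp (x ^ 2) := by
  have hsq : 1 + x ^ 2 ≤ exp (x ^ 2) := by linarith [add_one_le_exp (x ^ 2)]
  rcases le_or_gt |x| 1 with hx | hx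
  · linarith [(abs_le.1 (abs_exp_sub_one_sub_id_le hx)).2]
  rcases le_or_gt 0 x with hx0 | hx0
  · rw [abs_of_nonneg hx0] at hx
    linarith [exp_le_exp.2 (show x ≤ x ^ 2 by nlinarith)]
  · rw [abs_of_neg hx0] at hx
    nlinarith [exp_le_one_iff.2 hx0.le]

lemma exp_mul_le_one_sub_add_mul_exp {θ : ℝ} (h0 : 0 ≤ θ) (h1 : θ ≤ 1) (u : ℝ) :
    exp (θ * u) ≤ 1 - θ + θ * exp u := by
  simpa using convexOn_exp.2 (Set.mem_univ 0) (Set.mem_univ u) (sub_nonneg.2 h1) h0 (by ring)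

lemma two_mul_mul_le_sq_mul_sq_add_sq_div {c : ℝ} (hc : c ≠ 0) (l y : ℝ) :
    2 * (l * y) ≤ l ^ 2 * c ^ 2 + y ^ 2 / c ^ 2 := by
  calc 2 * (l * y) = 2 * (l * c) * (y / c) := by field_simp
    _ ≤ (l * c) ^ 2 + (y / c) ^ 2 := two_mul_le_add_sq _ _
    _ = l ^ 2 * c ^ 2 + y ^ 2 / c ^ 2 := by ring

end Real

section ExpSquareMoment

variable {Ω : Type*} [MeasurableSpace Ω] {μ : Measure Ω} {Y : Ω → ℝ} {c1 c2 : ℝ}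

lemma integrable_exp_mul_of_integrable_exp_sq_div (hY : AEMeasurable Y μ) (hc1 : c1 ≠ 0)
    (hint : Integrable (fun ω ↦ exp (Y ω ^ 2 / c1 ^ 2)) μ) (l : ℝ) :
    Integrable (fun ω ↦ exp (l * Y ω)) μ := by
  refine (hint.const_mul (exp (l ^ 2 * c1 ^ 2))).mono'
    (hY.const_mul l).exp.aestronglyMeasurable (ae_of_all _ fun ω ↦ ?_)
  rw [norm_of_nonneg (exp_pos _).le, ← exp_add, exp_le_exp]
  have := two_mul_mul_le_sq_mul_sq_add_sq_div hc1 l (Y ω)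
  nlinarith [sq_nonneg l, sq_nonneg c1, div_nonneg (sq_nonneg (Y ω)) (sq_nonneg c1)]

variable [IsProbabilityMeasure μ]

lemma mgf_le_one_add_of_sq_mul_sq_le_one (hY : AEMeasurable Y μ) (hc1 : c1 ≠ 0)
    (hmean : μ[Y] = 0) (hint : Integrable (fun ω ↦ exp (Y ω ^ 2 / c1 ^ 2)) μ) {l : ℝ}
    (hl : l ^ 2 * c1 ^ 2 ≤ 1) :
    mgf Y μ l ≤ 1 + l ^ 2 * c1 ^ 2 * ((∫ ω, exp (Y ω ^ 2 / c1 ^ 2) ∂μ) - 1) := by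
  set θ := l ^ 2 * c1 ^ 2
  have hYint : Integrable Y μ := integrable_of_mem_interior_integrableExpSet <| by
    simp [integrableExpSet, integrable_exp_mul_of_integrable_exp_sq_div hY hc1 hint]
  have hpoint : ∀ ω, exp (l * Y ω) ≤ l * Y ω + (1 - θ + θ * exp (Y ω ^ 2 / c1 ^ 2)) := by
    intro ω
    have hsq : (l * Y ω) ^ 2 = θ * (Y ω ^ 2 / c1 ^ 2) := by simp only [θ]; field_simp
    calc exp (l * Y ω) ≤ l * Y ω + exp (θ * (Y ω ^ 2 / c1 ^ 2)) := hsq ▸ exp_le_add_exp_sq _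
      _ ≤ _ := by gcongr; exact exp_mul_le_one_sub_add_mul_exp (by positivity) hl _
  have hrest : Integrable (fun ω ↦ 1 - θ + θ * exp (Y ω ^ 2 / c1 ^ 2)) μ :=
    (integrable_const _).add (hint.const_mul θ)
  calc mgf Y μ l
      ≤ ∫ ω, l * Y ω + (1 - θ + θ * exp (Y ω ^ 2 / c1 ^ 2)) ∂μ :=
        integral_mono (integrable_exp_mul_of_integrable_exp_sq_div hY hc1 hint l)
          ((hYint.const_mul l).add hrest) hpoint
    _ = 1 + θ * ((∫ ω, exp (Y ω ^ 2 / c1 ^ 2) ∂μ) - 1) := by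
        rw [integral_add (hYint.const_mul l) hrest,
          integral_add (integrable_const _) (hint.const_mul θ), integral_const_mul,
          integral_const_mul, hmean]
        simp only [integral_const, probReal_univ, smul_eq_mul]
        ring

lemma mgf_le_exp_mul_one_add_half (hY : AEMeasurable Y μ) (hc1 : c1 ≠ 0)
    (hint : Integrable (fun ω ↦ exp (Y ω ^ 2 / c1 ^ 2)) μ) (l : ℝ) :
    mgf Y μ l ≤
      exp (l ^ 2 * c1 ^ 2 / 2) * (1 + ((∫ ω, exp (Y ω ^ 2 / c1 ^ 2) ∂μ) - 1) / 2) := by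
  have hpoint : ∀ ω, exp (l * Y ω) ≤
      exp (l ^ 2 * c1 ^ 2 / 2) * (1 / 2 + 1 / 2 * exp (Y ω ^ 2 / c1 ^ 2)) := by
    intro ω
    calc exp (l * Y ω) ≤ exp (l ^ 2 * c1 ^ 2 / 2) * exp (1 / 2 * (Y ω ^ 2 / c1 ^ 2)) := by
          rw [← exp_add, exp_le_exp]
          linarith [two_mul_mul_le_sq_mul_sq_add_sq_div hc1 l (Y ω)]
      _ ≤ _ := by
          gcongr
          linarith [exp_mul_le_one_sub_add_mul_exp (θ := 1 / 2) (by norm_num) (by norm_num)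
            (Y ω ^ 2 / c1 ^ 2)]
  calc mgf Y μ l
      ≤ ∫ ω, exp (l ^ 2 * c1 ^ 2 / 2) * (1 / 2 + 1 / 2 * exp (Y ω ^ 2 / c1 ^ 2)) ∂μ :=
        integral_mono (integrable_exp_mul_of_integrable_exp_sq_div hY hc1 hint l)
          (((integrable_const _).add (hint.const_mul _)).const_mul _) hpoint
    _ = _ := by
        rw [integral_const_mul, integral_add (integrable_const _) (hint.const_mul _),
          integral_const_mul]
        simp only [integral_const, probReal_univ, smul_eq_mul]
        ring

lemma mgf_le_exp_sq_mul_of_integral_exp_sq_div_le (hY : AEMeasurable Y μ) (hc1 : c1 ≠ 0)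
    (hmean : μ[Y] = 0) (hint : Integrable (fun ω ↦ exp (Y ω ^ 2 / c1 ^ 2)) μ)
    (hsub : c1 ^ 2 * ((∫ ω, exp (Y ω ^ 2 / c1 ^ 2) ∂μ) - 1) ≤ c2 ^ 2) (l : ℝ) :
    mgf Y μ l ≤ exp ((c1 ^ 2 + c2 ^ 2) * l ^ 2) := by
  rcases le_or_gt (l ^ 2 * c1 ^ 2) 1 with hl | hl
  · calc mgf Y μ l ≤ 1 + l ^ 2 * c1 ^ 2 * ((∫ ω, exp (Y ω ^ 2 / c1 ^ 2) ∂μ) - 1) :=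
          mgf_le_one_add_of_sq_mul_sq_le_one hY hc1 hmean hint hl
      _ ≤ 1 + l ^ 2 * c2 ^ 2 := by nlinarith [sq_nonneg l]
      _ ≤ exp ((c1 ^ 2 + c2 ^ 2) * l ^ 2) := by
          refine (add_one_le_exp _).trans' ?_
          nlinarith [sq_nonneg l, sq_nonneg c1]
  · have hsub' : ((∫ ω, exp (Y ω ^ 2 / c1 ^ 2) ∂μ) - 1) / 2 ≤ l ^ 2 * c2 ^ 2 / 2 := by
      rw [div_le_div_iff_of_pos_right two_pos]
      nlinarith [sq_nonneg c2, sq_pos_of_ne_zero hc1]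
    calc mgf Y μ l
        ≤ exp (l ^ 2 * c1 ^ 2 / 2) * (1 + ((∫ ω, exp (Y ω ^ 2 / c1 ^ 2) ∂μ) - 1) / 2) :=
          mgf_le_exp_mul_one_add_half hY hc1 hint l
      _ ≤ exp (l ^ 2 * c1 ^ 2 / 2) * exp (l ^ 2 * c2 ^ 2 / 2) := by
          gcongr
          linarith [add_one_le_exp (l ^ 2 * c2 ^ 2 / 2)]
      _ ≤ exp ((c1 ^ 2 + c2 ^ 2) * l ^ 2) := by
          rw [← exp_add, exp_le_exp]
          nlinarith [sq_nonneg l, sq_nonneg c1, sq_nonneg c2]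

lemma hasSubgaussianMGF_of_integral_exp_sq_div_le (hY : AEMeasurable Y μ) (hc1 : c1 ≠ 0)
    (hmean : μ[Y] = 0) (hint : Integrable (fun ω ↦ exp (Y ω ^ 2 / c1 ^ 2)) μ)
    (hsub : c1 ^ 2 * ((∫ ω, exp (Y ω ^ 2 / c1 ^ 2) ∂μ) - 1) ≤ c2 ^ 2) :
    HasSubgaussianMGF Y (2 * (c1 ^ 2 + c2 ^ 2)).toNNReal μ where
  integrable_exp_mul := integrable_exp_mul_of_integrable_exp_sq_div hY hc1 hint
  mgf_le l := by
    convert mgf_le_exp_sq_mul_of_integral_exp_sq_div_le hY hc1 hmean hint hsub l using 2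
    rw [Real.coe_toNNReal _ (by positivity)]
    ring

end ExpSquareMoment

lemma ProbabilityTheory.HasSubgaussianMGF.measureReal_abs_ge_le {Ω : Type*}
    [MeasurableSpace Ω] {μ : Measure Ω} {X : Ω → ℝ} {c : NNReal} (h : HasSubgaussianMGF X c μ)
    {ε : ℝ} (hε : 0 ≤ ε) :
    μ.real {ω | ε ≤ |X ω|} ≤ 2 * exp (-ε ^ 2 / (2 * c)) := by
  have hsplit : {ω | ε ≤ |X ω|} = {ω | ε ≤ X ω} ∪ {ω | ε ≤ (-X) ω} := by
    ext ω
    simp [le_abs', le_neg, or_comm]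
  rw [hsplit, two_mul]
  exact (measureReal_union_le _ _).trans (add_le_add (h.measure_ge_le hε) (h.neg.measure_ge_le hε))

theorem stmt6_general {Ω : Type*} [MeasurableSpace Ω] (μ : Measure Ω) [IsProbabilityMeasure μ]
    {n : ℕ} (hn : 0 < n) (Y : Fin n → Ω → ℝ) (c1 c2 t : ℝ) (hc1 : 0 < c1)
    (ht : 0 < t)
    (hmeas : ∀ i, Measurable (Y i))
    (hindep : iIndepFun Y μ)
    (hmean : ∀ i, ∫ ω, Y i ω ∂μ = 0)
    (hintexp : ∀ i, Integrable (fun ω => Real.exp ((Y i ω) ^ 2 / c1 ^ 2)) μ)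
    (hsub : ∀ i, c1 ^ 2 * ((∫ ω, Real.exp ((Y i ω) ^ 2 / c1 ^ 2) ∂μ) - 1) ≤ c2 ^ 2) :
    μ {ω | t < |(n : ℝ)⁻¹ * ∑ i, Y i ω|} ≤
      ENNReal.ofReal (2 * Real.exp (-(n * t ^ 2) / (8 * (c1 ^ 2 + c2 ^ 2)))) := by
  have hnR : (0 : ℝ) < n := Nat.cast_pos.2 hn
  have hsum := HasSubgaussianMGF.sum_of_iIndepFun hindep (s := Finset.univ) fun i _ ↦
    hasSubgaussianMGF_of_integral_exp_sq_div_le (c2 := c2) (hmeas i).aemeasurable hc1.ne'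
      (hmean i) (hintexp i) (hsub i)
  have htail := hsum.measureReal_abs_ge_le (ε := n * t) (by positivity)
  have hevent : {ω | t < |(n : ℝ)⁻¹ * ∑ i, Y i ω|} ⊆ {ω | n * t ≤ |∑ i, Y i ω|} := by
    intro ω hω
    simp only [Set.mem_ofPred_eq, abs_mul, abs_inv, abs_of_pos hnR] at hω ⊢
    exact ((lt_inv_mul_iff₀ hnR).1 hω).le
  rw [← ofReal_measureReal]
  refine ENNReal.ofReal_le_ofReal ((measureReal_mono hevent).trans (htail.trans ?_))
  gcongr 2 * exp ?_
  have hK : 0 < c1 ^ 2 + c2 ^ 2 := by positivity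
  simp only [Finset.sum_const, Finset.card_univ, Fintype.card_fin, nsmul_eq_mul, NNReal.coe_mul,
    NNReal.coe_natCast, Real.coe_toNNReal _ (mul_pos two_pos hK).le]
  rw [div_le_div_iff₀ (by positivity) (by positivity)]
  nlinarith [mul_pos (mul_pos (pow_pos hnR 2) (pow_pos ht 2)) hK]

/-- Sub-Gaussian concentration: for independent mean-zero uniformly sub-Gaussian `Y i`,
`P(|n⁻¹ ∑ Y i| > t) ≤ 2 exp(-n t² / (8 (c1² + c2²)))`. -/
theorem stmt6 {Ω : Type*} [MeasurableSpace Ω] (μ : Measure Ω) [IsProbabilityMeasure μ]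
    {n : ℕ} (hn : 0 < n) (Y : Fin n → Ω → ℝ) (c1 c2 t : ℝ) (hc1 : 0 < c1) (hc2 : 0 < c2)
    (ht : 0 < t)
    (hmeas : ∀ i, Measurable (Y i))
    (hindep : iIndepFun Y μ)
    (hmean : ∀ i, ∫ ω, Y i ω ∂μ = 0)
    (hintexp : ∀ i, Integrable (fun ω => Real.exp ((Y i ω) ^ 2 / c1 ^ 2)) μ)
    (hsub : ∀ i, c1 ^ 2 * ((∫ ω, Real.exp ((Y i ω) ^ 2 / c1 ^ 2) ∂μ) - 1) ≤ c2 ^ 2) :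
    μ {ω | t < |(n : ℝ)⁻¹ * ∑ i, Y i ω|} ≤
      ENNReal.ofReal (2 * Real.exp (-(n * t ^ 2) / (8 * (c1 ^ 2 + c2 ^ 2)))) :=
  stmt6_general μ hn Y c1 c2 t hc1 ht hmeas hindep hmean hintexp hsub
end

section
/- Suppose X is a bounded random variable with |X| ≤ c0 a.s., and Y is sub-Gaussian: c1^2 E[exp(Y^2/c1^2) - 1] ≤ c2^2. Then Z = X Y^2 satisfies E[|Z - E[Z]|^k] ≤ (k!/2) c3^{k-2} c4^2 for all integers k ≥ 2, with c3 = 2 c0 c1^2 and c4 = 2 c0 c1 c2. -/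
/-!
Write `Z = X Y²`. Centering costs a factor `2ᵏ`: `|Z - E Z|ᵏ ≤ 2ᵏ⁻¹ (|Z|ᵏ + |E Z|ᵏ)` and, by
Jensen, `|E Z|ᵏ ≤ E |Z|ᵏ`. Pointwise `|Z|ᵏ ≤ (c0 c1²)ᵏ uᵏ` with `u = Y²/c1²`, and the elementary
inequality `uᵏ ≤ (k!/2) (eᵘ - 1)` for `u ≥ 0`, `k ≥ 2`, turns the sub-Gaussian hypothesis into
`E |Z|ᵏ ≤ (c0 c1²)ᵏ (k!/2) c2²/c1²`.
-/

open MeasureTheory Real Nat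

lemma pow_succ_div_factorial_le {x : ℝ} (hx : 0 ≤ x) (n : ℕ) :
    x ^ (n + 1) / (n + 1)! ≤ x ^ n / n ! + x ^ (n + 2) / (n + 2)! := by
  have hq : x / (n + 1) ≤ 1 + x ^ 2 / ((n + 1) * (n + 2)) := by
    field_simp
    -- `x² - (n + 2) x + (n + 1)(n + 2)` has negative discriminant
    nlinarith [sq_nonneg (x - (n + 2) / 2)]
  calc x ^ (n + 1) / (n + 1)! = x ^ n / n ! * (x / (n + 1)) := by
        rw [factorial_succ]; push_cast; field_simp; ring
    _ ≤ x ^ n / n ! * (1 + x ^ 2 / ((n + 1) * (n + 2))) := by gcongr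
    _ = x ^ n / n ! + x ^ (n + 2) / (n + 2)! := by
        rw [factorial_succ, factorial_succ]; push_cast; field_simp; ring

lemma pow_le_factorial_div_two_mul_exp_sub_one {x : ℝ} (hx : 0 ≤ x) {n : ℕ} (hn : 2 ≤ n) :
    x ^ n ≤ n ! / 2 * (exp x - 1) := by
  -- the terms of orders `n - 1`, `n`, `n + 1` of the exponential series together exceed `2 xⁿ/n!`
  obtain ⟨m, rfl⟩ : ∃ m, n = m + 1 + 1 := ⟨n - 2, by omega⟩
  have hexp := sum_le_exp_of_nonneg hx (m + 1 + 3)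
  rw [Finset.sum_range_succ, Finset.sum_range_succ, Finset.sum_range_succ] at hexp
  have hone : 1 ≤ ∑ i ∈ Finset.range (m + 1), x ^ i / i ! := by
    simpa using Finset.single_le_sum (fun i _ => by positivity : ∀ i ∈ Finset.range (m + 1),
      0 ≤ x ^ i / i !) (Finset.mem_range.2 m.succ_pos)
  have hmid := pow_succ_div_factorial_le hx (m + 1)
  have hpos : (0 : ℝ) < (m + 1 + 1)! := by positivity
  have hhalf : x ^ (m + 1 + 1) / (m + 1 + 1)! ≤ (exp x - 1) / 2 := by linarith
  rw [div_le_iff₀ hpos] at hhalf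
  linarith

section Centering

variable {Ω : Type*} [MeasurableSpace Ω] {μ : Measure Ω} [IsProbabilityMeasure μ] {f : Ω → ℝ}

lemma abs_integral_pow_le_integral_abs_pow (hf : Integrable f μ)
    {n : ℕ} (hfn : Integrable (fun ω => |f ω| ^ n) μ) :
    |∫ ω, f ω ∂μ| ^ n ≤ ∫ ω, |f ω| ^ n ∂μ :=
  calc |∫ ω, f ω ∂μ| ^ n ≤ (∫ ω, |f ω| ∂μ) ^ n := by
        gcongr; exact abs_integral_le_integral_abs
    _ ≤ ∫ ω, |f ω| ^ n ∂μ :=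
        (convexOn_pow n).map_integral_le (continuous_pow n).continuousOn isClosed_Ici
          (.of_forall fun ω => abs_nonneg (f ω)) hf.abs hfn

lemma integral_abs_sub_integral_pow_le (hf : Integrable f μ)
    {n : ℕ} (hn : n ≠ 0) (hfn : Integrable (fun ω => |f ω| ^ n) μ) :
    ∫ ω, |f ω - ∫ ω', f ω' ∂μ| ^ n ∂μ ≤ 2 ^ n * ∫ ω, |f ω| ^ n ∂μ := by
  set m := ∫ ω', f ω' ∂μ
  have hpt : ∀ ω, |f ω - m| ^ n ≤ 2 ^ (n - 1) * (|f ω| ^ n + |m| ^ n) := fun ω =>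
    (pow_le_pow_left₀ (abs_nonneg _) (abs_sub _ _) n).trans
      (add_pow_le (abs_nonneg _) (abs_nonneg _) n)
  have hbound : ∫ ω, |f ω - m| ^ n ∂μ ≤ ∫ ω, 2 ^ (n - 1) * (|f ω| ^ n + |m| ^ n) ∂μ :=
    integral_mono_of_nonneg (.of_forall fun ω => by positivity)
      ((hfn.add (integrable_const _)).const_mul _) (.of_forall hpt)
  rw [integral_const_mul, integral_add hfn (integrable_const _), integral_const,
    probReal_univ, one_smul] at hbound
  have hjensen := abs_integral_pow_le_integral_abs_pow hf hfn
  calc ∫ ω, |f ω - m| ^ n ∂μ ≤ 2 ^ (n - 1) * (∫ ω, |f ω| ^ n ∂μ + |m| ^ n) := hbound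
    _ ≤ 2 ^ (n - 1) * (2 * ∫ ω, |f ω| ^ n ∂μ) := by gcongr; linarith
    _ = 2 ^ n * ∫ ω, |f ω| ^ n ∂μ := by rw [← mul_assoc, pow_sub_one_mul hn]

end Centering

lemma abs_mul_sq_pow_le {x y c₀ c : ℝ} (hx : |x| ≤ c₀) (hc : c ≠ 0) {n : ℕ} (hn : 2 ≤ n) :
    |x * y ^ 2| ^ n ≤ (c₀ * c ^ 2) ^ n * (n ! / 2 * (exp (y ^ 2 / c ^ 2) - 1)) :=
  have hc₀ : 0 ≤ c₀ := (abs_nonneg x).trans hx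
  calc |x * y ^ 2| ^ n = |x| ^ n * (c ^ 2) ^ n * (y ^ 2 / c ^ 2) ^ n := by
        rw [abs_mul, abs_of_nonneg (sq_nonneg y), ← mul_pow, ← mul_pow, mul_assoc,
          mul_div_cancel₀ _ (pow_ne_zero 2 hc)]
    _ ≤ c₀ ^ n * (c ^ 2) ^ n * (n ! / 2 * (exp (y ^ 2 / c ^ 2) - 1)) := by
        gcongr
        exact pow_le_factorial_div_two_mul_exp_sub_one (by positivity) hn
    _ = (c₀ * c ^ 2) ^ n * (n ! / 2 * (exp (y ^ 2 / c ^ 2) - 1)) := by rw [mul_pow]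

section SubGaussianSquare

variable {Ω : Type*} [MeasurableSpace Ω] {μ : Measure Ω} {X Y : Ω → ℝ} {c₀ c : ℝ}

lemma integrable_abs_mul_sq_pow [IsFiniteMeasure μ] (hX : ∀ᵐ ω ∂μ, |X ω| ≤ c₀) (hc : c ≠ 0)
    (hexp : Integrable (fun ω => exp (Y ω ^ 2 / c ^ 2)) μ)
    (hZ : AEStronglyMeasurable (fun ω => X ω * Y ω ^ 2) μ) {n : ℕ} (hn : 2 ≤ n) :
    Integrable (fun ω => |X ω * Y ω ^ 2| ^ n) μ := by
  refine (((hexp.sub (integrable_const 1)).const_mul (n ! / 2)).const_mul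
    ((c₀ * c ^ 2) ^ n)).mono' (by fun_prop) ?_
  filter_upwards [hX] with ω hω
  rw [Real.norm_of_nonneg (by positivity)]
  exact abs_mul_sq_pow_le hω hc hn

lemma integral_abs_mul_sq_pow_le [IsProbabilityMeasure μ] (hX : ∀ᵐ ω ∂μ, |X ω| ≤ c₀) (hc : c ≠ 0)
    (hexp : Integrable (fun ω => exp (Y ω ^ 2 / c ^ 2)) μ) {n : ℕ} (hn : 2 ≤ n) :
    ∫ ω, |X ω * Y ω ^ 2| ^ n ∂μ ≤
      (c₀ * c ^ 2) ^ n * (n ! / 2 * ((∫ ω, exp (Y ω ^ 2 / c ^ 2) ∂μ) - 1)) := by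
  have hbound : ∫ ω, |X ω * Y ω ^ 2| ^ n ∂μ ≤
      ∫ ω, (c₀ * c ^ 2) ^ n * (n ! / 2 * (exp (Y ω ^ 2 / c ^ 2) - 1)) ∂μ :=
    integral_mono_of_nonneg (.of_forall fun ω => by positivity)
      (((hexp.sub (integrable_const 1)).const_mul (n ! / 2)).const_mul ((c₀ * c ^ 2) ^ n))
      (hX.mono fun ω hω => abs_mul_sq_pow_le (y := Y ω) hω hc hn)
  rwa [integral_const_mul, integral_const_mul, integral_sub hexp (integrable_const 1),
    integral_const, probReal_univ, one_smul] at hbound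

end SubGaussianSquare

theorem stmt9_general {Ω : Type*} [MeasurableSpace Ω] (μ : Measure Ω) [IsProbabilityMeasure μ]
    (X Y : Ω → ℝ) (c0 c1 c2 : ℝ) (hc0 : 0 < c0) (hc1 : 0 < c1)
    (hX : ∀ᵐ ω ∂μ, |X ω| ≤ c0)
    (hintexp : Integrable (fun ω => Real.exp ((Y ω) ^ 2 / c1 ^ 2)) μ)
    (hsub : c1 ^ 2 * ((∫ ω, Real.exp ((Y ω) ^ 2 / c1 ^ 2) ∂μ) - 1) ≤ c2 ^ 2)
    (hintZ : Integrable (fun ω => X ω * (Y ω) ^ 2) μ) :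
    ∀ k : ℕ, 2 ≤ k →
      ∫ ω, |X ω * (Y ω) ^ 2 - ∫ ω', X ω' * (Y ω') ^ 2 ∂μ| ^ k ∂μ ≤
        (k.factorial : ℝ) / 2 * (2 * c0 * c1 ^ 2) ^ (k - 2) * (2 * c0 * c1 * c2) ^ 2 := by
  intro k hk
  have hZk := integrable_abs_mul_sq_pow hX hc1.ne' hintexp hintZ.aestronglyMeasurable hk
  obtain ⟨j, rfl⟩ : ∃ j, k = j + 2 := ⟨k - 2, by omega⟩
  calc ∫ ω, |X ω * Y ω ^ 2 - ∫ ω', X ω' * Y ω' ^ 2 ∂μ| ^ (j + 2) ∂μ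
      ≤ 2 ^ (j + 2) * ∫ ω, |X ω * Y ω ^ 2| ^ (j + 2) ∂μ :=
        integral_abs_sub_integral_pow_le hintZ (by omega) hZk
    _ ≤ 2 ^ (j + 2) * ((c0 * c1 ^ 2) ^ (j + 2) *
          ((j + 2)! / 2 * ((∫ ω, exp (Y ω ^ 2 / c1 ^ 2) ∂μ) - 1))) := by
        gcongr; exact integral_abs_mul_sq_pow_le hX hc1.ne' hintexp hk
    _ = (j + 2)! / 2 * (2 * c0 * c1 ^ 2) ^ j * (2 * c0 * c1) ^ 2 *
          (c1 ^ 2 * ((∫ ω, exp (Y ω ^ 2 / c1 ^ 2) ∂μ) - 1)) := by ring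
    _ ≤ (j + 2)! / 2 * (2 * c0 * c1 ^ 2) ^ j * (2 * c0 * c1) ^ 2 * c2 ^ 2 := by gcongr
    _ = (j + 2)! / 2 * (2 * c0 * c1 ^ 2) ^ (j + 2 - 2) * (2 * c0 * c1 * c2) ^ 2 := by
        rw [Nat.add_sub_cancel]; ring

/-- If `|X| ≤ c0` a.s. and `Y` is sub-Gaussian, then `Z = X Y²` satisfies the Bernstein
moment condition with `c3 = 2 c0 c1²` and `c4 = 2 c0 c1 c2`. -/
theorem stmt9 {Ω : Type*} [MeasurableSpace Ω] (μ : Measure Ω) [IsProbabilityMeasure μ]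
    (X Y : Ω → ℝ) (c0 c1 c2 : ℝ) (hc0 : 0 < c0) (hc1 : 0 < c1) (hc2 : 0 < c2)
    (hX : ∀ᵐ ω ∂μ, |X ω| ≤ c0)
    (hintexp : Integrable (fun ω => Real.exp ((Y ω) ^ 2 / c1 ^ 2)) μ)
    (hsub : c1 ^ 2 * ((∫ ω, Real.exp ((Y ω) ^ 2 / c1 ^ 2) ∂μ) - 1) ≤ c2 ^ 2)
    (hintZ : Integrable (fun ω => X ω * (Y ω) ^ 2) μ)
    (hintZk : ∀ k : ℕ,
      Integrable (fun ω => |X ω * (Y ω) ^ 2 - ∫ ω', X ω' * (Y ω') ^ 2 ∂μ| ^ k) μ) :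
    ∀ k : ℕ, 2 ≤ k →
      ∫ ω, |X ω * (Y ω) ^ 2 - ∫ ω', X ω' * (Y ω') ^ 2 ∂μ| ^ k ∂μ ≤
        (k.factorial : ℝ) / 2 * (2 * c0 * c1 ^ 2) ^ (k - 2) * (2 * c0 * c1 * c2) ^ 2 :=
  stmt9_general μ X Y c0 c1 c2 hc0 hc1 hX hintexp hsub hintZ
end

section
/- Let Y, D, Z be random variables/vectors with D ∈ {0,1}, and suppose Assumption (unconfoundedness): (Y_1, Y_0) ⫫ D | Z, Y = D Y_1 + (1-D) Y_0, and η < E[D|Z] < 1 - η a.s. for some η ∈ (0,1). Let π*(Z) = E[D|Z] and m*(Z) = E[Y | D=1, Z]. Define the aIPW signal Y(π, m) = D Y / π(Z) - (D/π(Z) - 1) m(Z). Then for any measurable integrable π with η ≤ π(Z) ≤ 1-η and any integrable m, E[Y(π*, m) | X] = E[Y_1 | X] and E[Y(π, m*) | X] = E[Y_1 | X], where X is a measurable function of Z (double robustness of the aIPW signal). -/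
/-!
Given `Z`, the treatment `D` is independent of `Y₁`, so `E[D Y₁ | Z] = π*(Z) E[Y₁ | Z]`; comparing
with `π*(Z) m*(Z) = E[D Y | Z] = E[D Y₁ | Z]` and cancelling `π*(Z) > 0` gives
`m*(Z) = E[Y₁ | Z]`. Writing the signal as `Y(ρ, h) = ρ⁻¹ (D Y - D h) + h` and pulling the
`Z`-measurable factors out of the conditional expectation,
`E[Y(ρ, h) | Z] = (π* m* - π* h) / ρ + h`, which equals `m*` as soon as `ρ = π*` or `h = m*`.
The tower property then passes from `Z` to the coarser `X = f(Z)`.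
-/

open MeasureTheory ProbabilityTheory Filter

namespace MeasureTheory

variable {Ω : Type*} {m mΩ : MeasurableSpace Ω} {μ : Measure Ω}

theorem condExp_ae_eq_of_condExp_ae_eq_of_le {E : Type*} [NormedAddCommGroup E]
    [NormedSpace ℝ E] [CompleteSpace E] {m' : MeasurableSpace Ω} (hm'm : m' ≤ m) (hm : m ≤ mΩ)
    [SigmaFinite (μ.trim hm)] {f g : Ω → E} (hfg : μ[f | m] =ᵐ[μ] μ[g | m]) :
    μ[f | m'] =ᵐ[μ] μ[g | m'] :=
  (condExp_condExp_of_le hm'm hm).symm.trans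
    ((condExp_congr_ae hfg).trans (condExp_condExp_of_le hm'm hm))

end MeasureTheory

namespace ProbabilityTheory

variable {Ω : Type*} {m mΩ : MeasurableSpace Ω} {μ : Measure Ω}

theorem CondIndepFun.condExp_mul_ae_eq [StandardBorelSpace Ω] {hm : m ≤ mΩ}
    [IsFiniteMeasure μ] {X Y : Ω → ℝ} (hXY : CondIndepFun m hm X Y μ) (hX : Measurable X)
    (hY : Measurable Y) (hXi : Integrable X μ) (hYi : Integrable Y μ)
    (hXYi : Integrable (X * Y) μ) :
    μ[X * Y | m] =ᵐ[μ] μ[X | m] * μ[Y | m] := by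
  -- for a.e. `ω`, the law of `(X, Y)` under the conditional measure `condExpKernel μ m ω` is a product
  have hprod := ae_of_ae_trim hm ((condIndepFun_iff_map_prod_eq_prod_map_map hX hY).mp hXY)
  filter_upwards [hprod, condExp_ae_eq_integral_condExpKernel hm hXYi,
    condExp_ae_eq_integral_condExpKernel hm hXi,
    condExp_ae_eq_integral_condExpKernel hm hYi] with ω hω hXYω hXω hYω
  set κ := condExpKernel μ m
  rw [Kernel.prod_apply, Kernel.map_apply _ (hX.prodMk hY), Kernel.map_apply _ hX,
    Kernel.map_apply _ hY] at hω
  rw [hXYω, Pi.mul_apply, hXω, hYω]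
  calc ∫ ω', (X * Y) ω' ∂κ ω
      = ∫ p, p.1 * p.2 ∂(κ ω).map (fun ω' => (X ω', Y ω')) :=
        (integral_map (hX.prodMk hY).aemeasurable
          (continuous_fst.mul continuous_snd).aestronglyMeasurable).symm
    _ = ∫ p, p.1 * p.2 ∂((κ ω).map X).prod ((κ ω).map Y) := by rw [hω]
    _ = (∫ x, x ∂(κ ω).map X) * ∫ y, y ∂(κ ω).map Y := integral_prod_mul (fun x => x) (fun y => y)
    _ = (∫ ω', X ω' ∂κ ω) * ∫ ω', Y ω' ∂κ ω := by
        rw [integral_map hX.aemeasurable (f := fun x => x) aestronglyMeasurable_id,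
          integral_map hY.aemeasurable (f := fun y => y) aestronglyMeasurable_id]

theorem CondIndepFun.ae_eq_condExp_of_mul_ae_eq [StandardBorelSpace Ω] {hm : m ≤ mΩ}
    [IsFiniteMeasure μ] {D Y p q : Ω → ℝ} (hDY : CondIndepFun m hm D Y μ) (hD : Measurable D)
    (hY : Measurable Y) (hDi : Integrable D μ) (hYi : Integrable Y μ)
    (hDYi : Integrable (D * Y) μ) (hpD : μ[D | m] =ᵐ[μ] p) (hp0 : ∀ᵐ ω ∂μ, p ω ≠ 0)
    (hpq : μ[D * Y | m] =ᵐ[μ] p * q) :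
    q =ᵐ[μ] μ[Y | m] := by
  filter_upwards [hDY.condExp_mul_ae_eq hD hY hDi hYi hDYi, hpD, hp0, hpq]
    with ω hmulω hpDω hp0ω hpqω
  rw [Pi.mul_apply, hpDω] at hmulω
  rw [Pi.mul_apply] at hpqω
  exact mul_left_cancel₀ hp0ω (hpqω.symm.trans hmulω)

end ProbabilityTheory

section Aipw

variable {Ω : Type*} {m mΩ : MeasurableSpace Ω} {μ : Measure Ω}

noncomputable def aipwSignal (D Y ρ h : Ω → ℝ) : Ω → ℝ :=
  fun ω => D ω * Y ω / ρ ω - (D ω / ρ ω - 1) * h ω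

theorem aipwSignal_eq (D Y ρ h : Ω → ℝ) :
    aipwSignal D Y ρ h = ρ⁻¹ * (D * Y - D * h) + h := by
  ext ω
  simp only [aipwSignal, Pi.add_apply, Pi.mul_apply, Pi.sub_apply, Pi.inv_apply, div_eq_mul_inv]
  ring

variable {D Y ρ h : Ω → ℝ}

theorem condExp_aipwSignal_ae_eq (hm : m ≤ mΩ) [SigmaFinite (μ.trim hm)]
    (hρ : StronglyMeasurable[m] ρ) (hh : StronglyMeasurable[m] h)
    (hsig : Integrable (aipwSignal D Y ρ h) μ) (hD : Integrable D μ) (hDY : Integrable (D * Y) μ)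
    (hDh : Integrable (D * h) μ) (hhi : Integrable h μ) :
    μ[aipwSignal D Y ρ h | m] =ᵐ[μ] (μ[D * Y | m] - h * μ[D | m]) / ρ + h := by
  have hWi : Integrable (D * Y - D * h) μ := hDY.sub hDh
  have hρWi : Integrable (ρ⁻¹ * (D * Y - D * h)) μ := by
    simpa [aipwSignal_eq] using hsig.sub hhi
  have hρinv : StronglyMeasurable[m] ρ⁻¹ := hρ.measurable.inv.stronglyMeasurable
  have hW : μ[D * Y - D * h | m] =ᵐ[μ] μ[D * Y | m] - h * μ[D | m] := by
    rw [mul_comm D h] at hDh ⊢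
    exact (condExp_sub hDY hDh m).trans
      (EventuallyEq.rfl.sub (condExp_mul_of_stronglyMeasurable_left hh hDh hD))
  rw [aipwSignal_eq, div_eq_inv_mul]
  calc μ[ρ⁻¹ * (D * Y - D * h) + h | m]
      =ᵐ[μ] μ[ρ⁻¹ * (D * Y - D * h) | m] + μ[h | m] := condExp_add hρWi hhi m
    _ =ᵐ[μ] ρ⁻¹ * μ[D * Y - D * h | m] + h := by
        rw [condExp_of_stronglyMeasurable hm hh hhi]
        exact (condExp_mul_of_stronglyMeasurable_left hρinv hρWi hWi).add EventuallyEq.rfl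
    _ =ᵐ[μ] ρ⁻¹ * (μ[D * Y | m] - h * μ[D | m]) + h :=
        (EventuallyEq.rfl.mul hW).add EventuallyEq.rfl

theorem condExp_aipwSignal_ae_eq_of_propensity (hm : m ≤ mΩ) [SigmaFinite (μ.trim hm)]
    {p q : Ω → ℝ} (hp : StronglyMeasurable[m] p)
    (hh : StronglyMeasurable[m] h) (hsig : Integrable (aipwSignal D Y p h) μ)
    (hD : Integrable D μ) (hDY : Integrable (D * Y) μ) (hDh : Integrable (D * h) μ)
    (hhi : Integrable h μ) (hpD : μ[D | m] =ᵐ[μ] p) (hpq : μ[D * Y | m] =ᵐ[μ] p * q)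
    (hp0 : ∀ᵐ ω ∂μ, p ω ≠ 0) :
    μ[aipwSignal D Y p h | m] =ᵐ[μ] q := by
  filter_upwards [condExp_aipwSignal_ae_eq hm hp hh hsig hD hDY hDh hhi, hpD, hpq, hp0]
    with ω hsigω hpDω hpqω hp0ω
  rw [hsigω, Pi.add_apply, Pi.div_apply, Pi.sub_apply, Pi.mul_apply, hpDω, hpqω, Pi.mul_apply]
  field_simp
  ring

theorem condExp_aipwSignal_ae_eq_of_outcome (hm : m ≤ mΩ) [SigmaFinite (μ.trim hm)]
    {p q : Ω → ℝ} (hρ : StronglyMeasurable[m] ρ)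
    (hq : StronglyMeasurable[m] q) (hsig : Integrable (aipwSignal D Y ρ q) μ)
    (hD : Integrable D μ) (hDY : Integrable (D * Y) μ) (hDq : Integrable (D * q) μ)
    (hqi : Integrable q μ) (hpD : μ[D | m] =ᵐ[μ] p) (hpq : μ[D * Y | m] =ᵐ[μ] p * q) :
    μ[aipwSignal D Y ρ q | m] =ᵐ[μ] q := by
  filter_upwards [condExp_aipwSignal_ae_eq hm hρ hq hsig hD hDY hDq hqi, hpD, hpq]
    with ω hsigω hpDω hpqω
  rw [hsigω, Pi.add_apply, Pi.div_apply, Pi.sub_apply, Pi.mul_apply, hpDω, hpqω, Pi.mul_apply]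
  ring

end Aipw

theorem stmt18_general {Ωs 𝒵 𝒳 : Type*} [MeasurableSpace Ωs] [StandardBorelSpace Ωs]
    [MeasurableSpace 𝒵] [MeasurableSpace 𝒳]
    (μ : Measure Ωs) [IsProbabilityMeasure μ]
    (Y1 Y0 D Yobs : Ωs → ℝ) (Z : Ωs → 𝒵) (f : 𝒵 → 𝒳)
    (hY1 : Measurable Y1) (hDmeas : Measurable D)
    (hf : Measurable f)
    (hY1int : Integrable Y1 μ)
    (hbin : ∀ ω, D ω = 0 ∨ D ω = 1)
    (hYobs : ∀ ω, Yobs ω = D ω * Y1 ω + (1 - D ω) * Y0 ω)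
    (hZle : MeasurableSpace.comap Z inferInstance ≤ (inferInstance : MeasurableSpace Ωs))
    -- unconfoundedness: (Y₁, Y₀) ⫫ D | Z
    (hindep : CondIndepFun (MeasurableSpace.comap Z inferInstance) hZle
      (fun ω => (Y1 ω, Y0 ω)) D μ)
    (η : ℝ) (hη : η ∈ Set.Ioo (0 : ℝ) 1)
    (πstar mstar : 𝒵 → ℝ) (hπstarmeas : Measurable πstar) (hmstarmeas : Measurable mstar)
    -- π*(Z) = E[D | Z]
    (hπstar : (fun ω => πstar (Z ω)) =ᵐ[μ] μ[D | MeasurableSpace.comap Z inferInstance])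
    -- overlap: η < E[D|Z] < 1 - η a.s.
    (hoverlap : ∀ᵐ ω ∂μ, η < πstar (Z ω) ∧ πstar (Z ω) < 1 - η)
    -- m*(Z) = E[Y | D = 1, Z], i.e. π*(Z) m*(Z) = E[D Y | Z]
    (hmstar : (fun ω => πstar (Z ω) * mstar (Z ω)) =ᵐ[μ]
      μ[fun ω => D ω * Yobs ω | MeasurableSpace.comap Z inferInstance])
    (π m : 𝒵 → ℝ) (hπmeas : Measurable π) (hmmeas : Measurable m)
    (hmint : Integrable (fun ω => m (Z ω)) μ)
    (hmstarint : Integrable (fun ω => mstar (Z ω)) μ)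
    (hsig1int : Integrable
      (fun ω => D ω * Yobs ω / πstar (Z ω) - (D ω / πstar (Z ω) - 1) * m (Z ω)) μ)
    (hsig2int : Integrable
      (fun ω => D ω * Yobs ω / π (Z ω) - (D ω / π (Z ω) - 1) * mstar (Z ω)) μ) :
    (μ[fun ω => D ω * Yobs ω / πstar (Z ω) - (D ω / πstar (Z ω) - 1) * m (Z ω) |
        MeasurableSpace.comap (fun ω => f (Z ω)) inferInstance] =ᵐ[μ]
      μ[Y1 | MeasurableSpace.comap (fun ω => f (Z ω)) inferInstance]) ∧
    (μ[fun ω => D ω * Yobs ω / π (Z ω) - (D ω / π (Z ω) - 1) * mstar (Z ω) |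
        MeasurableSpace.comap (fun ω => f (Z ω)) inferInstance] =ᵐ[μ]
      μ[Y1 | MeasurableSpace.comap (fun ω => f (Z ω)) inferInstance]) := by
  have hXZ : MeasurableSpace.comap (fun ω => f (Z ω)) inferInstance
      ≤ MeasurableSpace.comap Z inferInstance := by
    rw [← Function.comp_def, ← MeasurableSpace.comap_comp]
    exact MeasurableSpace.comap_mono hf.comap_le
  have hmeasZ {g : 𝒵 → ℝ} (hg : Measurable g) :
      StronglyMeasurable[MeasurableSpace.comap Z inferInstance] (fun ω => g (Z ω)) :=
    (hg.comp (comap_measurable Z)).stronglyMeasurable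
  have hDbound : ∀ᵐ ω ∂μ, ‖D ω‖ ≤ 1 :=
    ae_of_all _ fun ω => by rcases hbin ω with h | h <;> simp [h]
  have hDi : Integrable D μ := .of_bound hDmeas.aestronglyMeasurable 1 hDbound
  have hDmul {g : Ωs → ℝ} (hg : Integrable g μ) : Integrable (D * g) μ :=
    hg.bdd_mul hDmeas.aestronglyMeasurable hDbound
  have hDY : D * Yobs = D * Y1 :=
    funext fun ω => by rcases hbin ω with h | h <;> simp [hYobs, h]
  have hp0 : ∀ᵐ ω ∂μ, πstar (Z ω) ≠ 0 := hoverlap.mono fun ω h => (hη.1.trans h.1).ne'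
  have hmY1 : (fun ω => mstar (Z ω)) =ᵐ[μ] μ[Y1 | MeasurableSpace.comap Z inferInstance] :=
    (hindep.comp measurable_fst measurable_id).symm.ae_eq_condExp_of_mul_ae_eq hDmeas hY1 hDi
      hY1int (hDmul hY1int) hπstar.symm hp0 (hDY ▸ hmstar.symm)
  refine ⟨condExp_ae_eq_of_condExp_ae_eq_of_le hXZ hZle ?_,
    condExp_ae_eq_of_condExp_ae_eq_of_le hXZ hZle ?_⟩
  · exact (condExp_aipwSignal_ae_eq_of_propensity hZle (hmeasZ hπstarmeas) (hmeasZ hmmeas)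
      hsig1int hDi (hDY ▸ hDmul hY1int) (hDmul hmint) hmint hπstar.symm hmstar.symm hp0).trans hmY1
  · exact (condExp_aipwSignal_ae_eq_of_outcome hZle (hmeasZ hπmeas) (hmeasZ hmstarmeas)
      hsig2int hDi (hDY ▸ hDmul hY1int) (hDmul hmstarint) hmstarint hπstar.symm
      hmstar.symm).trans hmY1

/-- Double robustness of the aIPW signal: under unconfoundedness `(Y₁,Y₀) ⫫ D | Z`, overlap,
`π*(Z) = E[D|Z]` and `m*(Z) = E[Y | D=1, Z]` (encoded as `π*(Z) m*(Z) = E[DY|Z]`), for any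
bounded-away-from-0-and-1 propensity model `π` and any outcome model `m`, conditioning on
`X = f(Z)`: `E[Y(π*, m) | X] = E[Y₁ | X]` and `E[Y(π, m*) | X] = E[Y₁ | X]`. -/
theorem stmt18 {Ωs 𝒵 𝒳 : Type*} [MeasurableSpace Ωs] [StandardBorelSpace Ωs] [Nonempty Ωs]
    [MeasurableSpace 𝒵] [MeasurableSpace 𝒳]
    (μ : Measure Ωs) [IsProbabilityMeasure μ]
    (Y1 Y0 D Yobs : Ωs → ℝ) (Z : Ωs → 𝒵) (f : 𝒵 → 𝒳)
    (hY1 : Measurable Y1) (hY0 : Measurable Y0) (hDmeas : Measurable D)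
    (hZ : Measurable Z) (hf : Measurable f)
    (hY1int : Integrable Y1 μ) (hY0int : Integrable Y0 μ)
    (hbin : ∀ ω, D ω = 0 ∨ D ω = 1)
    (hYobs : ∀ ω, Yobs ω = D ω * Y1 ω + (1 - D ω) * Y0 ω)
    (hZle : MeasurableSpace.comap Z inferInstance ≤ (inferInstance : MeasurableSpace Ωs))
    -- unconfoundedness: (Y₁, Y₀) ⫫ D | Z
    (hindep : CondIndepFun (MeasurableSpace.comap Z inferInstance) hZle
      (fun ω => (Y1 ω, Y0 ω)) D μ)
    (η : ℝ) (hη : η ∈ Set.Ioo (0 : ℝ) 1)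
    (πstar mstar : 𝒵 → ℝ) (hπstarmeas : Measurable πstar) (hmstarmeas : Measurable mstar)
    -- π*(Z) = E[D | Z]
    (hπstar : (fun ω => πstar (Z ω)) =ᵐ[μ] μ[D | MeasurableSpace.comap Z inferInstance])
    -- overlap: η < E[D|Z] < 1 - η a.s.
    (hoverlap : ∀ᵐ ω ∂μ, η < πstar (Z ω) ∧ πstar (Z ω) < 1 - η)
    -- m*(Z) = E[Y | D = 1, Z], i.e. π*(Z) m*(Z) = E[D Y | Z]
    (hmstar : (fun ω => πstar (Z ω) * mstar (Z ω)) =ᵐ[μ]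
      μ[fun ω => D ω * Yobs ω | MeasurableSpace.comap Z inferInstance])
    (π m : 𝒵 → ℝ) (hπmeas : Measurable π) (hmmeas : Measurable m)
    (hπbound : ∀ z, η ≤ π z ∧ π z ≤ 1 - η)
    (hmint : Integrable (fun ω => m (Z ω)) μ)
    (hmstarint : Integrable (fun ω => mstar (Z ω)) μ)
    (hsig1int : Integrable
      (fun ω => D ω * Yobs ω / πstar (Z ω) - (D ω / πstar (Z ω) - 1) * m (Z ω)) μ)
    (hsig2int : Integrable
      (fun ω => D ω * Yobs ω / π (Z ω) - (D ω / π (Z ω) - 1) * mstar (Z ω)) μ) :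
    (μ[fun ω => D ω * Yobs ω / πstar (Z ω) - (D ω / πstar (Z ω) - 1) * m (Z ω) |
        MeasurableSpace.comap (fun ω => f (Z ω)) inferInstance] =ᵐ[μ]
      μ[Y1 | MeasurableSpace.comap (fun ω => f (Z ω)) inferInstance]) ∧
    (μ[fun ω => D ω * Yobs ω / π (Z ω) - (D ω / π (Z ω) - 1) * mstar (Z ω) |
        MeasurableSpace.comap (fun ω => f (Z ω)) inferInstance] =ᵐ[μ]
      μ[Y1 | MeasurableSpace.comap (fun ω => f (Z ω)) inferInstance]) :=
  stmt18_general μ Y1 Y0 D Yobs Z f hY1 hDmeas hf hY1int hbin hYobs hZle hindep η hη πstar mstar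
    hπstarmeas hmstarmeas hπstar hoverlap hmstar π m hπmeas hmmeas hmint hmstarint hsig1int hsig2int
end
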